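/- Let d ≥ 1, β > 0, β* > 0, κ > 0, and let Δ ∈ ℝ^d satisfy β·‖Δ‖₂² ≤ κ². Let ε ∼ N(0, 1/β*) (real) and x ∼ N(0, I_d) be independent, and let v ∈ ℝ^d with ‖v‖₂ = 1. Then | E[ √(β/(2π)) · exp(−(β/2)(ε − ⟨Δ, x⟩)²) · ε · ⟨x, v⟩ ] | ≤ √(κ²/(2π)) · (β/(β+β*)) · (1/g̃), where g̃ = √((β+β*)/β*) · (1 + (β·β*/(β+β*))·‖Δ‖₂²)^{3/2}. -/

import Mathlib

open Real MeasureTheory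

open scoped RealInnerProductSpace

/-!
Completing the square in `ε` turns the inner integral into
`√(β/2π) ⟪x, v⟫ · β⟪Δ, x⟫/(β + β*) · √(2π/(β + β*)) · exp (-(c/2) ⟪Δ, x⟫²)`
with `c = ββ*/(β + β*)`. In an orthonormal basis whose first vector is `u = Δ/‖Δ‖` the remaining
Gaussian integral over `x` factorises over the coordinates; odd moments vanish, so only the
component `⟪u, v⟫` of `v` contributes, through the second moment of a centred Gaussian of precision
`1 + c‖Δ‖²`. The expectation is therefore exactly
`√(β/2π) · β/(β + β*) · ⟪Δ, v⟫ / (√((β + β*)/β*) · (1 + c‖Δ‖²)^(3/2))`,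
and the bound follows from `√β |⟪Δ, v⟫| ≤ √β ‖Δ‖ ≤ κ`.
-/

theorem integral_mul_exp_neg_mul_sq_eq_zero (b : ℝ) : ∫ x : ℝ, x * exp (-b * x ^ 2) = 0 := by
  have h := integral_neg_eq_self (fun x : ℝ ↦ x * exp (-b * x ^ 2)) volume
  simp only [neg_sq, neg_mul, integral_neg] at h ⊢
  linarith

theorem integrable_pow_mul_exp_neg_mul_sq {b : ℝ} (hb : 0 < b) (n : ℕ) :
    Integrable fun x : ℝ ↦ x ^ n * exp (-b * x ^ 2) := by
  simpa [rpow_natCast] using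
    integrable_rpow_mul_exp_neg_mul_sq hb (s := n) (by linarith [n.cast_nonneg (α := ℝ)])

theorem rpow_three_div_two_eq_mul_sqrt {x : ℝ} (hx : 0 ≤ x) : x ^ (3 / 2 : ℝ) = x * √x := by
  rw [show (3 / 2 : ℝ) = 1 + 1 / 2 by norm_num, rpow_add' hx (by norm_num), rpow_one,
    sqrt_eq_rpow]

theorem rpow_neg_half_mul_sqrt_pow {x : ℝ} (hx : 0 < x) (n : ℕ) :
    x ^ (-(n : ℝ) / 2) * √x ^ n = 1 := by
  rw [sqrt_eq_rpow, ← rpow_natCast, ← rpow_mul hx.le, ← rpow_add hx]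
  ring_nf
  exact rpow_zero x

theorem integral_sq_mul_exp_neg_half_mul_sq {s : ℝ} (hs : 0 < s) :
    ∫ x : ℝ, x ^ 2 * exp (-(s / 2) * x ^ 2) = √(2 * π) / s ^ (3 / 2 : ℝ) := by
  have h := integral_rpow_mul_exp_neg_mul_rpow (p := 2) (q := 2) two_pos (by norm_num)
    (half_pos hs)
  have hΓ : Gamma (3 / 2) = √π / 2 := by
    rw [show (3 / 2 : ℝ) = 1 / 2 + 1 by norm_num, Gamma_add_one (by norm_num),
      Gamma_one_half_eq]
    ring
  norm_num only [rpow_two, hΓ] at h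
  have heven := integral_comp_abs (f := fun x : ℝ ↦ x ^ 2 * exp (-(s / 2) * x ^ 2))
  simp only [sq_abs] at heven
  rw [heven, h, rpow_neg (by positivity), rpow_three_div_two_eq_mul_sqrt hs.le,
    rpow_three_div_two_eq_mul_sqrt (by positivity), sqrt_div' _ zero_le_two, sqrt_mul zero_le_two]
  field_simp

theorem integral_exp_neg_half_mul_sq (s : ℝ) :
    ∫ x : ℝ, exp (-(s / 2) * x ^ 2) = √(2 * π / s) := by
  rw [integral_gaussian, div_div_eq_mul_div, mul_comm]

theorem integral_mul_exp_neg_half_mul_sub_sq {s : ℝ} (hs : 0 < s) (m : ℝ) :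
    ∫ x : ℝ, x * exp (-(s / 2) * (x - m) ^ 2) = m * √(2 * π / s) := by
  rw [← integral_add_right_eq_self _ m]
  simp only [add_sub_cancel_right, add_mul]
  rw [integral_add (integrable_mul_exp_neg_mul_sq (half_pos hs))
    ((integrable_exp_neg_mul_sq (half_pos hs)).const_mul m), integral_const_mul,
    integral_mul_exp_neg_mul_sq_eq_zero, integral_exp_neg_half_mul_sq, zero_add]

theorem integral_exp_neg_mul_sub_sq_mul_exp_neg_mul_sq {β βs : ℝ} (h : 0 < β + βs) (m : ℝ) :
    ∫ ε : ℝ, exp (-(β / 2) * (ε - m) ^ 2) * ε * exp (-βs * ε ^ 2 / 2)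
      = β * m / (β + βs) * √(2 * π / (β + βs)) *
          exp (-(β * βs / (β + βs) / 2) * m ^ 2) := by
  have hsq : ∀ ε : ℝ, -(β / 2) * (ε - m) ^ 2 + -βs * ε ^ 2 / 2
      = -(β * βs / (β + βs) / 2) * m ^ 2 + -((β + βs) / 2) * (ε - β * m / (β + βs)) ^ 2 := by
    intro ε
    field_simp
    ring
  have hfun : ∀ ε : ℝ, exp (-(β / 2) * (ε - m) ^ 2) * ε * exp (-βs * ε ^ 2 / 2)
      = exp (-(β * βs / (β + βs) / 2) * m ^ 2) *
          (ε * exp (-((β + βs) / 2) * (ε - β * m / (β + βs)) ^ 2)) := by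
    intro ε
    rw [mul_right_comm, ← exp_add, hsq, exp_add]
    ring
  simp only [hfun]
  rw [integral_const_mul, integral_mul_exp_neg_half_mul_sub_sq h]
  ring

section
variable {ι : Type*} [Fintype ι]

theorem EuclideanSpace.integral_prod_apply (f : ι → ℝ → ℝ) :
    ∫ y : EuclideanSpace ℝ ι, ∏ i, f i (y i) = ∏ i, ∫ t, f i t := by
  rw [← integral_fintype_prod_eq_prod f (μ := fun _ ↦ volume), ← volume_pi]
  exact (EuclideanSpace.volume_preserving_symm_measurableEquiv_toLp ι).integral_comp'
    (fun z : ι → ℝ ↦ ∏ i, f i (z i))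

theorem EuclideanSpace.integrable_prod_apply {f : ι → ℝ → ℝ} (hf : ∀ i, Integrable (f i)) :
    Integrable fun y : EuclideanSpace ℝ ι ↦ ∏ i, f i (y i) :=
  ((EuclideanSpace.volume_preserving_symm_measurableEquiv_toLp ι).integrable_comp_emb
    (MeasurableEquiv.measurableEmbedding _)).2 (Integrable.fintype_prod (μ := fun _ ↦ volume) hf)

theorem EuclideanSpace.exp_neg_norm_sq_div_two (y : EuclideanSpace ℝ ι) :
    exp (-‖y‖ ^ 2 / 2) = ∏ i, exp (-(1 / 2) * y i ^ 2) := by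
  rw [← exp_sum, EuclideanSpace.norm_sq_eq, ← Finset.mul_sum]
  simp only [Real.norm_eq_abs, sq_abs]
  ring_nf

variable [DecidableEq ι]

noncomputable def coordMomentFactor (a : ℝ) (i j k : ι) (t : ℝ) : ℝ :=
  t ^ ((if k = i then 1 else 0) + (if k = j then 1 else 0)) *
    exp (-((1 + if k = i then a else 0) / 2) * t ^ 2)

theorem exp_neg_norm_sq_mul_apply_mul_apply_eq_prod (a : ℝ) (i j : ι) (y : EuclideanSpace ℝ ι) :
    exp (-‖y‖ ^ 2 / 2) * (y i * y j * exp (-(a / 2) * y i ^ 2))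
      = ∏ k, coordMomentFactor a i j k (y k) := by
  simp only [coordMomentFactor, Finset.prod_mul_distrib, pow_add, pow_ite, pow_one, pow_zero,
    Finset.prod_ite_eq', Finset.mem_univ, if_true, EuclideanSpace.exp_neg_norm_sq_div_two]
  have hexp : ∀ k, exp (-((1 + if k = i then a else 0) / 2) * y k ^ 2)
      = exp (-(1 / 2) * y k ^ 2) * if k = i then exp (-(a / 2) * y i ^ 2) else 1 := by
    intro k
    split_ifs with hk
    · rw [hk, ← exp_add]; ring_nf
    · simp
  rw [Finset.prod_congr rfl fun k _ ↦ hexp k, Finset.prod_mul_distrib, Finset.prod_ite_eq']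
  simp only [Finset.mem_univ, if_true]
  ring

theorem integrable_exp_neg_norm_sq_mul_apply_mul_apply {a : ℝ} (ha : -1 < a) (i j : ι) :
    Integrable fun y : EuclideanSpace ℝ ι ↦
      exp (-‖y‖ ^ 2 / 2) * (y i * y j * exp (-(a / 2) * y i ^ 2)) := by
  simp only [exp_neg_norm_sq_mul_apply_mul_apply_eq_prod]
  refine EuclideanSpace.integrable_prod_apply fun k ↦ integrable_pow_mul_exp_neg_mul_sq ?_ _
  split_ifs <;> linarith

theorem integral_exp_neg_norm_sq_mul_apply_mul_apply {a : ℝ} (ha : -1 < a) (i j : ι) :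
    ∫ y : EuclideanSpace ℝ ι, exp (-‖y‖ ^ 2 / 2) * (y i * y j * exp (-(a / 2) * y i ^ 2))
      = if j = i then √(2 * π) ^ Fintype.card ι / (1 + a) ^ (3 / 2 : ℝ) else 0 := by
  simp only [exp_neg_norm_sq_mul_apply_mul_apply_eq_prod]
  rw [EuclideanSpace.integral_prod_apply]
  split_ifs with hji
  · subst hji
    have hfactor : ∀ k, ∫ t, coordMomentFactor a j j k t
          = √(2 * π) * if k = j then 1 / (1 + a) ^ (3 / 2 : ℝ) else 1 := by
      intro k
      simp only [coordMomentFactor]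
      split_ifs with hk
      · simpa [div_eq_mul_inv] using integral_sq_mul_exp_neg_half_mul_sq (by linarith : 0 < 1 + a)
      · simpa using integral_exp_neg_half_mul_sq 1
    rw [Finset.prod_congr rfl fun k _ ↦ hfactor k, Finset.prod_mul_distrib, Finset.prod_const,
      Finset.prod_ite_eq']
    simp [div_eq_mul_inv]
  · refine Finset.prod_eq_zero (Finset.mem_univ j) ?_
    simpa [coordMomentFactor, hji] using integral_mul_exp_neg_mul_sq_eq_zero (1 / 2)

end

section
variable {E : Type*} [NormedAddCommGroup E] [InnerProductSpace ℝ E] [FiniteDimensional ℝ E]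

theorem exists_orthonormalBasis_apply_eq {u : E} (hu : ‖u‖ = 1) :
    ∃ (s : Finset E) (b : OrthonormalBasis s ℝ E) (i : s), b i = u := by
  have hon : Orthonormal ℝ ((↑) : ({u} : Set E) → E) :=
    orthonormal_subsingleton_iff.2 fun w ↦ by rw [w.2, hu]
  obtain ⟨s, b, hus, hb⟩ := hon.exists_orthonormalBasis_extension
  exact ⟨s, b, ⟨u, hus rfl⟩, by rw [hb]⟩

variable [MeasurableSpace E] [BorelSpace E]

theorem integral_exp_neg_norm_sq_mul_inner_mul_inner_of_norm_eq_one {u : E} (hu : ‖u‖ = 1)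
    (v : E) {a : ℝ} (ha : -1 < a) :
    ∫ x : E, exp (-‖x‖ ^ 2 / 2) * (⟪u, x⟫ * ⟪x, v⟫ * exp (-(a / 2) * ⟪u, x⟫ ^ 2))
      = ⟪u, v⟫ * √(2 * π) ^ Module.finrank ℝ E / (1 + a) ^ (3 / 2 : ℝ) := by
  classical
  obtain ⟨s, b, i, hbi⟩ := exists_orthonormalBasis_apply_eq hu
  have hcoord : ∀ y : EuclideanSpace ℝ s, ⟪u, b.repr.symm y⟫ = y i := by
    intro y
    rw [← hbi, ← b.repr_apply_apply, LinearIsometryEquiv.apply_symm_apply]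
  have hinner : ∀ y : EuclideanSpace ℝ s, ⟪b.repr.symm y, v⟫ = ∑ j, y j * b.repr v j := by
    intro y
    rw [← b.repr.inner_map_map, LinearIsometryEquiv.apply_symm_apply, PiLp.inner_apply]
    simp [mul_comm]
  have hrepr : ∀ y : EuclideanSpace ℝ s,
      exp (-‖b.repr.symm y‖ ^ 2 / 2) *
          (⟪u, b.repr.symm y⟫ * ⟪b.repr.symm y, v⟫ * exp (-(a / 2) * ⟪u, b.repr.symm y⟫ ^ 2))
        = ∑ j, b.repr v j * (exp (-‖y‖ ^ 2 / 2) * (y i * y j * exp (-(a / 2) * y i ^ 2))) := by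
    intro y
    rw [LinearIsometryEquiv.norm_map, hcoord, hinner, Finset.mul_sum, Finset.sum_mul,
      Finset.mul_sum]
    exact Finset.sum_congr rfl fun j _ ↦ by ring
  rw [← b.measurePreserving_repr_symm.integral_comp
    b.repr.symm.toHomeomorph.measurableEmbedding]
  simp only [hrepr]
  rw [integral_finsetSum _ fun j _ ↦
    (integrable_exp_neg_norm_sq_mul_apply_mul_apply ha i j).const_mul _]
  simp only [integral_const_mul, integral_exp_neg_norm_sq_mul_apply_mul_apply ha, mul_ite,
    mul_zero, Finset.sum_ite_eq', Finset.mem_univ, if_true]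
  rw [b.repr_apply_apply, hbi, Module.finrank_eq_card_basis b.toBasis, mul_div_assoc]

theorem integral_exp_neg_norm_sq_mul_inner_mul_inner (Δ v : E) {c : ℝ} (hc : -1 < c * ‖Δ‖ ^ 2) :
    ∫ x : E, exp (-‖x‖ ^ 2 / 2) * (⟪Δ, x⟫ * ⟪x, v⟫ * exp (-(c / 2) * ⟪Δ, x⟫ ^ 2))
      = ⟪Δ, v⟫ * √(2 * π) ^ Module.finrank ℝ E / (1 + c * ‖Δ‖ ^ 2) ^ (3 / 2 : ℝ) := by
  rcases eq_or_ne Δ 0 with rfl | hΔ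
  · simp
  have hΔn : ‖Δ‖ ≠ 0 := norm_ne_zero_iff.2 hΔ
  set u := ‖Δ‖⁻¹ • Δ
  have hu : ‖u‖ = 1 := by rw [norm_smul, norm_inv, norm_norm, inv_mul_cancel₀ hΔn]
  have hΔu : ∀ w, ⟪Δ, w⟫ = ‖Δ‖ * ⟪u, w⟫ := fun w ↦ by
    rw [real_inner_smul_left, mul_inv_cancel_left₀ hΔn]
  have hpt : ∀ x : E, exp (-‖x‖ ^ 2 / 2) * (⟪Δ, x⟫ * ⟪x, v⟫ * exp (-(c / 2) * ⟪Δ, x⟫ ^ 2))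
      = ‖Δ‖ * (exp (-‖x‖ ^ 2 / 2) *
          (⟪u, x⟫ * ⟪x, v⟫ * exp (-(c * ‖Δ‖ ^ 2 / 2) * ⟪u, x⟫ ^ 2))) := by
    intro x
    rw [hΔu]
    ring_nf
  simp only [hpt]
  rw [integral_const_mul, integral_exp_neg_norm_sq_mul_inner_mul_inner_of_norm_eq_one hu v hc,
    hΔu]
  ring

theorem expected_gaussian_gradient_eq {n : ℕ} (hn : Module.finrank ℝ E = n) {β βs : ℝ}
    (hβ : 0 < β) (hβs : 0 < βs) (Δ v : E) :
    (2 * π) ^ (-(n : ℝ) / 2) *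
      ∫ x : E, exp (-‖x‖ ^ 2 / 2) * (√(βs / (2 * π)) *
        ∫ ε : ℝ, √(β / (2 * π)) * exp (-(β / 2) * (ε - ⟪Δ, x⟫) ^ 2) * ε * ⟪x, v⟫ *
          exp (-βs * ε ^ 2 / 2))
      = √(β / (2 * π)) * (β / (β + βs)) / √((β + βs) / βs) * ⟪Δ, v⟫ /
          (1 + β * βs / (β + βs) * ‖Δ‖ ^ 2) ^ (3 / 2 : ℝ) := by
  have hB : 0 < β + βs := by positivity
  set c := β * βs / (β + βs)
  set A := √(β / (2 * π)) * (β / (β + βs)) / √((β + βs) / βs)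
  have hA : √(βs / (2 * π)) * (√(β / (2 * π)) * (β / (β + βs)) * √(2 * π / (β + βs))) = A := by
    have hsqrt : √(βs / (2 * π)) * √(2 * π / (β + βs)) = (√((β + βs) / βs))⁻¹ := by
      rw [← sqrt_mul (by positivity), ← sqrt_inv, inv_div]
      congr 1
      field_simp
    simp only [A, div_eq_mul_inv _ (√((β + βs) / βs)), ← hsqrt]
    ring
  have hinner : ∀ x : E,
      exp (-‖x‖ ^ 2 / 2) * (√(βs / (2 * π)) *
        ∫ ε : ℝ, √(β / (2 * π)) * exp (-(β / 2) * (ε - ⟪Δ, x⟫) ^ 2) * ε * ⟪x, v⟫ *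
          exp (-βs * ε ^ 2 / 2))
        = A * (exp (-‖x‖ ^ 2 / 2) * (⟪Δ, x⟫ * ⟪x, v⟫ * exp (-(c / 2) * ⟪Δ, x⟫ ^ 2))) := by
    intro x
    have hfun : ∀ ε : ℝ, √(β / (2 * π)) * exp (-(β / 2) * (ε - ⟪Δ, x⟫) ^ 2) * ε * ⟪x, v⟫ *
        exp (-βs * ε ^ 2 / 2) = (√(β / (2 * π)) * ⟪x, v⟫) *
          (exp (-(β / 2) * (ε - ⟪Δ, x⟫) ^ 2) * ε * exp (-βs * ε ^ 2 / 2)) := fun ε ↦ by ring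
    simp only [hfun, integral_const_mul,
      integral_exp_neg_mul_sub_sq_mul_exp_neg_mul_sq hB ⟪Δ, x⟫, ← hA, c]
    ring
  have hc : -1 < c * ‖Δ‖ ^ 2 := neg_one_lt_zero.trans_le (by positivity)
  simp only [hinner]
  rw [integral_const_mul, integral_exp_neg_norm_sq_mul_inner_mul_inner Δ v hc, hn,
    ← one_mul (A * ⟪Δ, v⟫ / _), ← rpow_neg_half_mul_sqrt_pow two_pi_pos n]
  ring

end

theorem stmt18_general
    {d : ℕ} (β βs κ : ℝ) (hβ : 0 < β) (hβs : 0 < βs)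
    (Δ : EuclideanSpace ℝ (Fin d)) (hΔ : β * ‖Δ‖ ^ 2 ≤ κ ^ 2)
    (v : EuclideanSpace ℝ (Fin d)) (hv : ‖v‖ = 1) :
    |(2 * π) ^ (-(d : ℝ) / 2) *
      ∫ x : EuclideanSpace ℝ (Fin d),
        (Real.exp (-‖x‖ ^ 2 / 2) * (Real.sqrt (βs / (2 * π)) *
          ∫ ε : ℝ, Real.sqrt (β / (2 * π)) *
            Real.exp (-(β / 2) * (ε - ⟪Δ, x⟫) ^ 2) * ε * ⟪x, v⟫ *
            Real.exp (-βs * ε ^ 2 / 2)))|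
    ≤ Real.sqrt (κ ^ 2 / (2 * π)) * (β / (β + βs)) *
        (1 / (Real.sqrt ((β + βs) / βs) *
          (1 + (β * βs / (β + βs)) * ‖Δ‖ ^ 2) ^ ((3 : ℝ) / 2))) := by
  have hbound : √(β / (2 * π)) * |⟪Δ, v⟫| ≤ √(κ ^ 2 / (2 * π)) := calc
    √(β / (2 * π)) * |⟪Δ, v⟫| ≤ √(β / (2 * π)) * ‖Δ‖ := by
      gcongr
      simpa [hv] using abs_real_inner_le_norm Δ v
    _ = √(β * ‖Δ‖ ^ 2 / (2 * π)) := by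
      rw [mul_div_right_comm, sqrt_mul (by positivity), sqrt_sq (norm_nonneg _)]
    _ ≤ √(κ ^ 2 / (2 * π)) := by gcongr
  rw [expected_gaussian_gradient_eq finrank_euclideanSpace_fin hβ hβs Δ v, abs_div, abs_mul,
    abs_of_pos (a := (1 + _ * ‖Δ‖ ^ 2) ^ _) (by positivity),
    abs_of_nonneg (a := _ / √_) (by positivity)]
  calc _ = √(β / (2 * π)) * |⟪Δ, v⟫| * (β / (β + βs)) *
        (1 / (√((β + βs) / βs) * (1 + β * βs / (β + βs) * ‖Δ‖ ^ 2) ^ (3 / 2 : ℝ))) := by ring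
    _ ≤ _ := by gcongr

/-- Bound on the good-point contribution to the gradient in the LWLC analysis for robust
least squares regression: for independent `ε ∼ N(0, 1/β*)` (real) and `x ∼ N(0, I_d)`,
`β‖Δ‖² ≤ κ²` and a unit vector `v`,
`|E[√(β/2π)·exp(−(β/2)(ε−⟨Δ,x⟩)²)·ε·⟨x,v⟩]| ≤ √(κ²/2π)·(β/(β+β*))·(1/g̃)` where
`g̃ = √((β+β*)/β*)·(1 + (ββ*/(β+β*))‖Δ‖²)^{3/2}`. -/
theorem stmt18
    {d : ℕ} (hd : 1 ≤ d) (β βs κ : ℝ) (hβ : 0 < β) (hβs : 0 < βs) (hκ : 0 < κ)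
    (Δ : EuclideanSpace ℝ (Fin d)) (hΔ : β * ‖Δ‖ ^ 2 ≤ κ ^ 2)
    (v : EuclideanSpace ℝ (Fin d)) (hv : ‖v‖ = 1) :
    |(2 * π) ^ (-(d : ℝ) / 2) *
      ∫ x : EuclideanSpace ℝ (Fin d),
        (Real.exp (-‖x‖ ^ 2 / 2) * (Real.sqrt (βs / (2 * π)) *
          ∫ ε : ℝ, Real.sqrt (β / (2 * π)) *
            Real.exp (-(β / 2) * (ε - ⟪Δ, x⟫) ^ 2) * ε * ⟪x, v⟫ *
            Real.exp (-βs * ε ^ 2 / 2)))|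
    ≤ Real.sqrt (κ ^ 2 / (2 * π)) * (β / (β + βs)) *
        (1 / (Real.sqrt ((β + βs) / βs) *
          (1 + (β * βs / (β + βs)) * ‖Δ‖ ^ 2) ^ ((3 : ℝ) / 2))) :=
  stmt18_general β βs κ hβ hβs Δ hΔ v hv
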